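/- arXiv:2402.11856 — 2 statements merged into one kernel-verified Lean document; each statement's English description precedes it below -/
import Mathlib

section
/- Let u : [−τ, ∞) → [0, ∞) be continuous and suppose there exist constants μ > σ e^{μτ} > 0 and M > 0 such that for all t ≥ 0, u(t) ≤ e^{−μt} u(0) + σ ∫_0^t e^{−μ(t−s)} u(s−τ) ds + M(1 − e^{−μt})/μ. Define the sup-norm history U(t) = sup_{ξ∈[−τ,0]} u(t+ξ). Then U(t) ≤ e^{μτ} e^{−μt} U(0) + σ e^{μτ} ∫_0^t e^{−μ(t−s)} U(s) ds + M/μ for all t ≥ 0. -/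
open Real

lemma sliding_sup_continuous (u : ℝ → ℝ) (hu : Continuous u) (τ : ℝ) (hτ : 0 < τ) :
    Continuous (fun t => sSup (u '' Set.Icc (t - τ) t)) := by
  rw [continuous_iff_continuousAt]
  intro t0
  rw [Metric.continuousAt_iff]
  intro ε hε
  set K := Set.Icc (t0 - τ - 1) (t0 + 1) with hK
  have hKc : IsCompact K := isCompact_Icc
  have huc := hKc.uniformContinuousOn_of_continuous hu.continuousOn
  rw [Metric.uniformContinuousOn_iff] at huc
  obtain ⟨δ, hδ0, hδ⟩ := huc (ε / 2) (by linarith)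
  refine ⟨min δ 1, by positivity, ?_⟩
  intro t hdist
  have key : ∀ a b : ℝ, |a - t0| ≤ 1 → |b - t0| ≤ 1 → |a - b| < δ →
      sSup (u '' Set.Icc (a - τ) a) ≤ sSup (u '' Set.Icc (b - τ) b) + ε / 2 := by
    intro a b ha hb hab
    have ha1 := (abs_le.1 ha).1
    have ha2 := (abs_le.1 ha).2
    have hb1 := (abs_le.1 hb).1
    have hb2 := (abs_le.1 hb).2
    apply csSup_le ((Set.nonempty_Icc.2 (by linarith)).image u)
    rintro _ ⟨x, hx, rfl⟩
    have hx1 := hx.1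
    have hx2 := hx.2
    set x' := max (min x b) (b - τ) with hx'def
    have hx'1 : b - τ ≤ x' := le_max_right _ _
    have hx'2 : x' ≤ b := max_le (min_le_right _ _) (by linarith)
    have hab1 : a - b ≤ |a - b| := le_abs_self _
    have hab2 : b - a ≤ |a - b| := by rw [abs_sub_comm]; exact le_abs_self _
    have hxx' : |x - x'| ≤ |a - b| := by
      rcases le_total x (b - τ) with h | h
      · have hx'e : x' = b - τ := by
          rw [hx'def, min_eq_left (le_trans h (by linarith)), max_eq_right h]
        rw [hx'e, abs_le]
        constructor <;> linarith
      · rcases le_total x b with h' | h'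
        · have hx'e : x' = x := by rw [hx'def, min_eq_left h', max_eq_left h]
          rw [hx'e, sub_self, abs_zero]
          exact abs_nonneg _
        · have hx'e : x' = b := by
            rw [hx'def, min_eq_right h', max_eq_left (by linarith : b - τ ≤ b)]
          rw [hx'e, abs_le]
          constructor <;> linarith
    have hxK : x ∈ K := ⟨by linarith, by linarith⟩
    have hx'K : x' ∈ K := ⟨by linarith, by linarith⟩
    have hd := hδ x hxK x' hx'K (by rw [Real.dist_eq]; exact lt_of_le_of_lt hxx' hab)
    rw [Real.dist_eq] at hd
    have hux : u x ≤ u x' + ε / 2 := by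
      have := (abs_lt.1 hd).2
      linarith
    have hux' : u x' ≤ sSup (u '' Set.Icc (b - τ) b) :=
      le_csSup (isCompact_Icc.image hu).bddAbove (Set.mem_image_of_mem u ⟨hx'1, hx'2⟩)
    linarith
  rw [Real.dist_eq] at hdist
  have ht1 : |t - t0| ≤ 1 := le_of_lt (lt_of_lt_of_le hdist (min_le_right _ _))
  have htδ : |t - t0| < δ := lt_of_lt_of_le hdist (min_le_left _ _)
  have k1 := key t t0 ht1 (by simp) htδ
  have k2 := key t0 t (by simp) ht1 (by rw [abs_sub_comm]; exact htδ)
  rw [Real.dist_eq, abs_lt]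
  constructor <;> linarith

theorem history_supnorm_delayed_integral_inequality
    (τ μ σ M : ℝ) (hτ : 0 < τ) (hμ : 0 < μ) (hσ : 0 < σ) (hM : 0 < M)
    (hstab : σ * Real.exp (μ * τ) < μ)
    (u : ℝ → ℝ) (hu : Continuous u) (hupos : ∀ t, -τ ≤ t → 0 ≤ u t)
    (hineq : ∀ t, 0 ≤ t →
      u t ≤ Real.exp (-μ * t) * u 0 +
        σ * (∫ s in (0:ℝ)..t, Real.exp (-μ * (t - s)) * u (s - τ)) +
        M * (1 - Real.exp (-μ * t)) / μ)
    (U : ℝ → ℝ) (hU : ∀ t, U t = sSup (u '' Set.Icc (t - τ) t)) :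
    ∀ t, 0 ≤ t →
      U t ≤ Real.exp (μ * τ) * Real.exp (-μ * t) * U 0 +
        σ * Real.exp (μ * τ) * (∫ s in (0:ℝ)..t, Real.exp (-μ * (t - s)) * U s) +
        M / μ := by
  have hUeq : U = fun t => sSup (u '' Set.Icc (t - τ) t) := funext hU
  have hUcont : Continuous U := by
    rw [hUeq]; exact sliding_sup_continuous u hu τ hτ
  have hUle : ∀ s x, x ∈ Set.Icc (s - τ) s → u x ≤ U s := by
    intro s x hx
    rw [hU s]
    exact le_csSup (isCompact_Icc.image hu).bddAbove (Set.mem_image_of_mem u hx)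
  have hUpos : ∀ s, 0 ≤ s → 0 ≤ U s := by
    intro s hs
    exact le_trans (hupos s (by linarith)) (hUle s s ⟨by linarith, le_refl s⟩)
  intro t ht
  -- nonnegativity of the big integral
  have hInt_nonneg : 0 ≤ ∫ s in (0:ℝ)..t, Real.exp (-μ * (t - s)) * U s := by
    apply intervalIntegral.integral_nonneg ht
    intro s hs
    exact mul_nonneg (Real.exp_nonneg _) (hUpos s hs.1)
  have hU0 : 0 ≤ U 0 := hUpos 0 le_rfl
  rw [hU t]
  apply csSup_le ((Set.nonempty_Icc.2 (by linarith)).image u)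
  rintro _ ⟨r, hr, rfl⟩
  have hr1 := hr.1
  have hr2 := hr.2
  rcases lt_or_ge r 0 with hneg | hpos
  · -- r < 0, so t < τ
    have hurU0 : u r ≤ U 0 := hUle 0 r ⟨by linarith, le_of_lt hneg⟩
    have h1 : (1 : ℝ) ≤ Real.exp (μ * τ) * Real.exp (-μ * t) := by
      rw [← Real.exp_add]
      apply Real.one_le_exp
      nlinarith
    have h2 : U 0 ≤ Real.exp (μ * τ) * Real.exp (-μ * t) * U 0 := le_mul_of_one_le_left hU0 h1
    have h3 : 0 ≤ σ * Real.exp (μ * τ) * (∫ s in (0:ℝ)..t, Real.exp (-μ * (t - s)) * U s) :=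
      mul_nonneg (mul_nonneg hσ.le (Real.exp_nonneg _)) hInt_nonneg
    have h4 : 0 < M / μ := div_pos hM hμ
    linarith
  · -- 0 ≤ r
    have hir := hineq r hpos
    -- term A
    have hA : Real.exp (-μ * r) * u 0 ≤ Real.exp (μ * τ) * Real.exp (-μ * t) * U 0 := by
      have he : Real.exp (-μ * r) ≤ Real.exp (μ * τ) * Real.exp (-μ * t) := by
        rw [← Real.exp_add]
        apply Real.exp_le_exp.2
        nlinarith
      have hu0 : u 0 ≤ U 0 := hUle 0 0 ⟨by linarith, le_rfl⟩
      have hu0' : 0 ≤ u 0 := hupos 0 (by linarith)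
      calc Real.exp (-μ * r) * u 0 ≤ Real.exp (μ * τ) * Real.exp (-μ * t) * u 0 :=
            mul_le_mul_of_nonneg_right he hu0'
        _ ≤ Real.exp (μ * τ) * Real.exp (-μ * t) * U 0 :=
            mul_le_mul_of_nonneg_left hu0 (by positivity)
    -- term B
    have hB : (∫ s in (0:ℝ)..r, Real.exp (-μ * (r - s)) * u (s - τ)) ≤
        Real.exp (μ * τ) * ∫ s in (0:ℝ)..t, Real.exp (-μ * (t - s)) * U s := by
      have hint1 : IntervalIntegrable (fun s => Real.exp (-μ * (r - s)) * u (s - τ))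
          MeasureTheory.volume 0 r := by
        apply Continuous.intervalIntegrable
        fun_prop
      have hint2 : IntervalIntegrable (fun s => Real.exp (μ * τ) *
          (Real.exp (-μ * (t - s)) * U s)) MeasureTheory.volume 0 r := by
        apply Continuous.intervalIntegrable
        fun_prop
      have hint2' : IntervalIntegrable (fun s => Real.exp (μ * τ) *
          (Real.exp (-μ * (t - s)) * U s)) MeasureTheory.volume 0 t := by
        apply Continuous.intervalIntegrable
        fun_prop
      have step1 : (∫ s in (0:ℝ)..r, Real.exp (-μ * (r - s)) * u (s - τ)) ≤
          ∫ s in (0:ℝ)..r, Real.exp (μ * τ) * (Real.exp (-μ * (t - s)) * U s) := by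
        apply intervalIntegral.integral_mono_on hpos hint1 hint2
        intro s hs
        have hs1 := hs.1
        have he : Real.exp (-μ * (r - s)) ≤ Real.exp (μ * τ) * Real.exp (-μ * (t - s)) := by
          rw [← Real.exp_add]
          apply Real.exp_le_exp.2
          nlinarith
        have hus : u (s - τ) ≤ U s := hUle s (s - τ) ⟨le_rfl, by linarith⟩
        have hus' : 0 ≤ u (s - τ) := hupos (s - τ) (by linarith)
        calc Real.exp (-μ * (r - s)) * u (s - τ)
            ≤ (Real.exp (μ * τ) * Real.exp (-μ * (t - s))) * u (s - τ) :=
              mul_le_mul_of_nonneg_right he hus'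
          _ ≤ (Real.exp (μ * τ) * Real.exp (-μ * (t - s))) * U s :=
              mul_le_mul_of_nonneg_left hus (by positivity)
          _ = Real.exp (μ * τ) * (Real.exp (-μ * (t - s)) * U s) := by ring
      have step2 : (∫ s in (0:ℝ)..r, Real.exp (μ * τ) * (Real.exp (-μ * (t - s)) * U s)) ≤
          ∫ s in (0:ℝ)..t, Real.exp (μ * τ) * (Real.exp (-μ * (t - s)) * U s) := by
        apply intervalIntegral.integral_mono_interval le_rfl hpos hr2 _ hint2'
        filter_upwards [MeasureTheory.ae_restrict_mem measurableSet_Ioc] with s hs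
        have hs1 : (0:ℝ) < s := hs.1
        have hs2 : s ≤ t := hs.2
        exact mul_nonneg (Real.exp_nonneg _)
          (mul_nonneg (Real.exp_nonneg _) (hUpos s hs1.le))
      calc (∫ s in (0:ℝ)..r, Real.exp (-μ * (r - s)) * u (s - τ))
          ≤ ∫ s in (0:ℝ)..t, Real.exp (μ * τ) * (Real.exp (-μ * (t - s)) * U s) :=
            le_trans step1 step2
        _ = Real.exp (μ * τ) * ∫ s in (0:ℝ)..t, Real.exp (-μ * (t - s)) * U s := by
            rw [intervalIntegral.integral_const_mul]
    -- term C
    have hC : M * (1 - Real.exp (-μ * r)) / μ ≤ M / μ := by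
      have h1 : M * (1 - Real.exp (-μ * r)) ≤ M := by nlinarith [Real.exp_pos (-μ * r)]
      exact div_le_div_of_nonneg_right h1 hμ.le |>.trans_eq rfl
    have hσB : σ * (∫ s in (0:ℝ)..r, Real.exp (-μ * (r - s)) * u (s - τ)) ≤
        σ * Real.exp (μ * τ) * (∫ s in (0:ℝ)..t, Real.exp (-μ * (t - s)) * U s) := by
      calc σ * (∫ s in (0:ℝ)..r, Real.exp (-μ * (r - s)) * u (s - τ))
          ≤ σ * (Real.exp (μ * τ) * ∫ s in (0:ℝ)..t, Real.exp (-μ * (t - s)) * U s) :=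
            mul_le_mul_of_nonneg_left hB hσ.le
        _ = σ * Real.exp (μ * τ) * (∫ s in (0:ℝ)..t, Real.exp (-μ * (t - s)) * U s) := by ring
    linarith
end

section
/- Let X be a metric space, M ⊆ X, and suppose for every ε > 0, choosing l ∈ ℕ with ζ^{l+1} R ≤ ε < ζ^l R (where 0 < ζ < 1, R > 0), the minimal number of ε-balls needed to cover M satisfies N_ε(M) ≤ 2(l+1)² K^l for a constant K ≥ 2. Then the fractal dimension of M satisfies dim_f M = limsup_{ε→0} ln N_ε(M)/ln(1/ε) ≤ ln K / (−ln ζ). -/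
open scoped Topology

/-- Minimal number of `ε`-balls needed to cover `M` (0 if no finite cover exists). -/
noncomputable def coverNum {X : Type*} [PseudoMetricSpace X] (ε : ℝ) (M : Set X) : ℕ :=
  sInf {n : ℕ | ∃ s : Finset X, s.card = n ∧ M ⊆ ⋃ c ∈ s, Metric.ball c ε}

/-- Upper box-counting (fractal) dimension. -/
noncomputable def fractalDim {X : Type*} [PseudoMetricSpace X] (M : Set X) : ℝ :=
  Filter.limsup (fun ε : ℝ => Real.log (coverNum ε M) / Real.log (1 / ε)) (𝓝[>] (0 : ℝ))

/-!
Put `t(ε) = log (R / ε) / (-log ζ)`. The scale index `l` attached to `ε` satisfies `l < t(ε)`, so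
`log N_ε(M) ≤ log 2 + 2 log (t + 1) + t log K`, while `log (1 / ε) = -log ζ · t - log R` exactly.
As `ε → 0⁺` we have `t → ∞`, and the quotient tends to `log K / (-log ζ)` because the polynomial
factor `2 (l + 1)²` only contributes `O(log t)`.
-/

open Filter Real

section

variable {ζ R ε : ℝ}

theorem exists_pow_succ_mul_le_lt_pow_mul (hζ1 : ζ < 1) (hε : 0 < ε) (hεR : ε < R) :
    ∃ l : ℕ, ζ ^ (l + 1) * R ≤ ε ∧ ε < ζ ^ l * R := by
  have hR : 0 < R := hε.trans hεR
  have hex : ∃ n : ℕ, ζ ^ n * R ≤ ε := by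
    obtain ⟨n, hn⟩ := exists_pow_lt_of_lt_one (div_pos hε hR) hζ1
    exact ⟨n, ((lt_div_iff₀ hR).1 hn).le⟩
  obtain ⟨l, hl⟩ : ∃ l, Nat.find hex = l + 1 :=
    Nat.exists_eq_add_one_of_ne_zero fun h0 => by
      simpa [h0] using (Nat.find_spec hex).trans_lt hεR
  refine ⟨l, hl ▸ Nat.find_spec hex, not_le.1 (Nat.find_min hex ?_)⟩
  omega

theorem natCast_lt_log_div_of_lt_pow_mul (hζ0 : 0 < ζ) (hζ1 : ζ < 1) (hR : 0 < R)
    (hε : 0 < ε) {l : ℕ} (hl : ε < ζ ^ l * R) : (l : ℝ) < log (R / ε) / -log ζ := by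
  have hlog : log ε < l * log ζ + log R := by
    simpa [log_mul (pow_pos hζ0 l).ne' hR.ne', log_pow] using log_lt_log hε hl
  rw [lt_div_iff₀ (neg_pos.2 (log_neg hζ0 hζ1)), log_div hR.ne' hε.ne']
  linarith

end

theorem log_le_of_le_two_mul_sq_mul_pow {N l : ℕ} {t K : ℝ} (hK : 1 ≤ K) (hlt : (l : ℝ) ≤ t)
    (hN : (N : ℝ) ≤ 2 * (l + 1) ^ 2 * K ^ l) :
    log N ≤ log 2 + 2 * log (t + 1) + t * log K := by
  have ht : 0 ≤ t := l.cast_nonneg.trans hlt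
  have hlogK : 0 ≤ log K := log_nonneg hK
  rcases N.eq_zero_or_pos with rfl | hN0
  · simp only [CharP.cast_eq_zero, log_zero]
    have hlog_t : 0 ≤ log (t + 1) := log_nonneg (le_add_of_nonneg_left ht)
    positivity
  calc log N ≤ log (2 * ((l : ℝ) + 1) ^ 2 * K ^ l) := log_le_log (by exact_mod_cast hN0) hN
    _ = log 2 + 2 * log (l + 1) + l * log K := by
      rw [log_mul (by positivity) (by positivity), log_mul two_ne_zero (by positivity), log_pow,
        log_pow]
      push_cast
      ring
    _ ≤ log 2 + 2 * log (t + 1) + t * log K := by gcongr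

theorem tendsto_add_two_mul_log_add_one_div (a b c d : ℝ) (ha : a ≠ 0) :
    Tendsto (fun t => (d + 2 * log (t + 1) + t * c) / (a * t - b)) atTop (𝓝 (c / a)) := by
  have hlog : Tendsto (fun t => log (t + 1) / t) atTop (𝓝 0) := by
    refine ((tendsto_pow_log_div_mul_add_atTop 1 (-1) 1 one_ne_zero).comp
      (tendsto_atTop_add_const_right _ 1 tendsto_id)).congr fun t => ?_
    simp
  have hinv (e : ℝ) : Tendsto (fun t : ℝ => e / t) atTop (𝓝 0) :=
    tendsto_const_nhds.div_atTop tendsto_id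
  have hlim := (((hinv d).add (hlog.const_mul 2)).add_const c).div
    ((hinv b).const_sub a) (by simpa using ha)
  simp only [zero_add, mul_zero, sub_zero] at hlim
  refine hlim.congr' ?_
  filter_upwards [eventually_gt_atTop 0] with t ht
  simp only [Pi.div_apply]
  field_simp

theorem tendsto_log_const_div_div_nhdsGT_zero {R a : ℝ} (hR : 0 < R) (ha : 0 < a) :
    Tendsto (fun ε => log (R / ε) / a) (𝓝[>] 0) atTop := by
  simp only [div_eq_mul_inv R]
  exact (tendsto_log_atTop.comp (tendsto_inv_nhdsGT_zero.const_mul_atTop hR)).atTop_div_const ha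

theorem fractal_dimension_bound_from_covering
    {X : Type*} [MetricSpace X] (M : Set X) (ζ R K : ℝ)
    (hζ0 : 0 < ζ) (hζ1 : ζ < 1) (hR : 0 < R) (hK : 2 ≤ K)
    (h : ∀ ε > (0 : ℝ), ∀ l : ℕ, ζ ^ (l + 1) * R ≤ ε → ε < ζ ^ l * R →
      (coverNum ε M : ℝ) ≤ 2 * (l + 1) ^ 2 * K ^ l) :
    fractalDim M ≤ Real.log K / (-Real.log ζ) := by
  have ha : 0 < -log ζ := neg_pos.2 (log_neg hζ0 hζ1)
  set t : ℝ → ℝ := fun ε => log (R / ε) / -log ζ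
  set G : ℝ → ℝ := fun s => (log 2 + 2 * log (s + 1) + s * log K) / (-log ζ * s - log R)
  have hG : Tendsto (G ∘ t) (𝓝[>] 0) (𝓝 (log K / -log ζ)) :=
    (tendsto_add_two_mul_log_add_one_div _ _ _ _ ha.ne').comp
      (tendsto_log_const_div_div_nhdsGT_zero hR ha)
  have hle : ∀ᶠ ε in 𝓝[>] 0, log (coverNum ε M) / log (1 / ε) ≤ G (t ε) := by
    filter_upwards [Ioo_mem_nhdsGT (lt_min hR one_pos)] with ε ⟨hε0, hε⟩
    obtain ⟨l, hl1, hl2⟩ :=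
      exists_pow_succ_mul_le_lt_pow_mul hζ1 hε0 (hε.trans_le (min_le_left _ _))
    have hden : -log ζ * t ε - log R = log (1 / ε) := by
      simp only [t, mul_div_cancel₀ _ ha.ne', log_div hR.ne' hε0.ne', one_div, log_inv]
      ring
    show _ ≤ _ / (-log ζ * t ε - log R)
    rw [hden]
    exact div_le_div_of_nonneg_right (log_le_of_le_two_mul_sq_mul_pow (by linarith)
      (natCast_lt_log_div_of_lt_pow_mul hζ0 hζ1 hR hε0 hl2).le (h ε hε0 l hl1 hl2))
      (log_nonneg (one_le_one_div hε0 (hε.trans_le (min_le_right _ _)).le))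
  have hnonneg : ∀ᶠ ε in 𝓝[>] 0, 0 ≤ log (coverNum ε M) / log (1 / ε) := by
    filter_upwards [Ioo_mem_nhdsGT one_pos] with ε ⟨hε0, hε1⟩
    exact div_nonneg (log_natCast_nonneg _) (log_nonneg (one_le_one_div hε0 hε1.le))
  exact (limsup_le_limsup hle (isCoboundedUnder_le_of_eventually_le _ hnonneg)
    hG.isBoundedUnder_le).trans_eq hG.limsup_eq
end
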